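/- arXiv:1506.03792 — 3 statements merged into one kernel-verified Lean document; each statement's English description precedes it below -/
import Mathlib

section
/- (Sufficiency of the column sum rank for recovery, Theorem 2, part 1.) Let W ≥ 1, let ρ_0,…,ρ_{W−1} ∈ {0,…,n}, and for each 0 ≤ t ≤ W−1 let A*_t ∈ K^{n×ρ_t} be a matrix of rank ρ_t. If d_R(W−1) > nW − Σ_{t=0}^{W−1} ρ_t, then for every source sequence (s_0,…,s_{W−1}) with s_0 ≠ 0 there exists some 0 ≤ t ≤ W−1 with x_t·A*_t ≠ 0 (products taken over F via the inclusion K ⊆ F); hence by linearity s_0 is uniquely determined by the received sequence (x_0·A*_0,…,x_{W−1}·A*_{W−1}). -/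
/-! If some window of packets were all erased by the `A*_t`, each `x_t` would have rank at
most `n - ρ_t`, because its `K`-coordinate map `K^n → F` kills the `ρ_t`-dimensional column
space of `A*_t`. Summing over the window gives a codeword of column sum rank at most
`nW - Σ ρ_t < d_R(W-1)`, which is impossible when `s_0 ≠ 0`. Uniqueness of `s_0` follows by
applying this to the difference of two source sequences. -/

open Matrix

/-- The rank of a vector over the extension field `F`: the `K`-dimension of the
`K`-subspace of `F` spanned by its entries. -/
noncomputable def vrank (K : Type*) [Field K] {F : Type*} [Field F] [Algebra K F]
    {n : ℕ} (x : Fin n → F) : ℕ :=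
  Module.finrank K (Submodule.span K (Set.range x))

/-- Channel packet `x_t = ∑_{i=0}^{min(t,m)} s_{t-i} G_i` (with `G i = 0` for `i > m`). -/
noncomputable def packet {F : Type*} [Field F] {k n : ℕ}
    (G : ℕ → Matrix (Fin k) (Fin n) F) (s : ℕ → Fin k → F) (t : ℕ) : Fin n → F :=
  ∑ i ∈ Finset.range (t + 1), Matrix.vecMul (s (t - i)) (G i)

/-- The `j`-th column sum rank distance. -/
noncomputable def dR (K : Type*) [Field K] {F : Type*} [Field F] [Algebra K F]
    {k n : ℕ} (G : ℕ → Matrix (Fin k) (Fin n) F) (j : ℕ) : ℕ :=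
  sInf {d : ℕ | ∃ s : ℕ → Fin k → F, s 0 ≠ 0 ∧
    d = ∑ t ∈ Finset.range (j + 1), vrank K (packet G s t)}

section

variable {K F : Type*} [Field K] [Field F] [Algebra K F]

lemma Fintype.linearCombination_eq_dotProduct {ι : Type*} [Fintype ι] (x : ι → F)
    (w : ι → K) : Fintype.linearCombination K x w = x ⬝ᵥ (algebraMap K F ∘ w) := by
  simp [Fintype.linearCombination_apply, dotProduct, Algebra.smul_def, mul_comm]

lemma vrank_add_rank_le_of_vecMul_eq_zero {n : ℕ} {ι : Type*} [Fintype ι] (x : Fin n → F)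
    (A : Matrix (Fin n) ι K) (h : x ᵥ* A.map (algebraMap K F) = 0) :
    vrank K x + A.rank ≤ n := by
  set f := Fintype.linearCombination K x
  have hker : LinearMap.range A.mulVecLin ≤ LinearMap.ker f := by
    rintro _ ⟨v, rfl⟩
    have hmap : algebraMap K F ∘ (A *ᵥ v) = A.map (algebraMap K F) *ᵥ (algebraMap K F ∘ v) :=
      funext (RingHom.map_mulVec _ A v)
    rw [LinearMap.mem_ker, mulVecLin_apply, Fintype.linearCombination_eq_dotProduct, hmap,
      dotProduct_mulVec, h, zero_dotProduct]
  have hrank_nullity := f.finrank_range_add_finrank_ker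
  rw [Fintype.range_linearCombination, Module.finrank_fin_fun] at hrank_nullity
  have := Submodule.finrank_mono hker
  unfold vrank Matrix.rank
  omega

variable {k n : ℕ} (G : ℕ → Matrix (Fin k) (Fin n) F)

lemma packet_sub (s s' : ℕ → Fin k → F) (t : ℕ) :
    packet G (s - s') t = packet G s t - packet G s' t := by
  simp [packet, sub_vecMul, Finset.sum_sub_distrib]

lemma dR_le_sum_vrank (j : ℕ) {s : ℕ → Fin k → F} (hs : s 0 ≠ 0) :
    dR K G j ≤ ∑ t ∈ Finset.range (j + 1), vrank K (packet G s t) :=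
  Nat.sInf_le ⟨s, hs, rfl⟩

lemma exists_vecMul_packet_ne_zero {W : ℕ} (hW : 1 ≤ W) {ρ : Fin W → ℕ}
    (A : (t : Fin W) → Matrix (Fin n) (Fin (ρ t)) K) (hA : ∀ t, (A t).rank = ρ t)
    (hd : n * W - ∑ t, ρ t < dR K G (W - 1)) {s : ℕ → Fin k → F} (hs : s 0 ≠ 0) :
    ∃ t : Fin W, packet G s t ᵥ* (A t).map (algebraMap K F) ≠ 0 := by
  by_contra! herased
  have hdR := dR_le_sum_vrank (K := K) G (W - 1) hs
  rw [Nat.sub_add_cancel hW, ← Fin.sum_univ_eq_sum_range] at hdR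
  have hsum : ∑ t : Fin W, (vrank K (packet G s t) + ρ t) ≤ ∑ _t : Fin W, n :=
    Finset.sum_le_sum fun t _ => hA t ▸ vrank_add_rank_le_of_vecMul_eq_zero _ _ (herased t)
  rw [Finset.sum_add_distrib, Finset.sum_const, Finset.card_univ, Fintype.card_fin,
    smul_eq_mul, mul_comm] at hsum
  omega

end

theorem stmt1_general (k n : ℕ)
    (K F : Type*) [Field K] [Field F] [Algebra K F]
    (G : ℕ → Matrix (Fin k) (Fin n) F)
    (W : ℕ) (hW : 1 ≤ W) (ρ : Fin W → ℕ)
    (A : (t : Fin W) → Matrix (Fin n) (Fin (ρ t)) K)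
    (hA : ∀ t, (A t).rank = ρ t)
    (hd : n * W - ∑ t, ρ t < dR K G (W - 1)) :
    (∀ s : ℕ → Fin k → F, s 0 ≠ 0 →
      ∃ t : Fin W, Matrix.vecMul (packet G s t) ((A t).map (algebraMap K F)) ≠ 0) ∧
    (∀ s s' : ℕ → Fin k → F,
      (∀ t : Fin W, Matrix.vecMul (packet G s t) ((A t).map (algebraMap K F)) =
        Matrix.vecMul (packet G s' t) ((A t).map (algebraMap K F))) → s 0 = s' 0) := by
  have detects (s : ℕ → Fin k → F) (hs : s 0 ≠ 0) :=
    exists_vecMul_packet_ne_zero G hW A hA hd hs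
  refine ⟨detects, fun s s' hss => ?_⟩
  by_contra hne
  obtain ⟨t, ht⟩ := detects (s - s') (sub_ne_zero.mpr hne)
  exact ht (by rw [packet_sub, sub_vecMul, hss t, sub_self])

/-- Theorem 2, part 1: sufficiency of the column sum rank. If
`d_R(W−1) > nW − Σ ρ_t`, then every codeword sequence with `s_0 ≠ 0` produces a nonzero
received packet somewhere in the window, and hence `s_0` is uniquely determined by the
received sequence. -/
theorem stmt1 (q M k n m : ℕ) (hq : IsPrimePow q)
    (K F : Type*) [Field K] [Fintype K] [Field F] [Algebra K F]
    (hK : Fintype.card K = q) (hM : Module.finrank K F = M)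
    (hk : 1 ≤ k) (hkn : k < n)
    (G : ℕ → Matrix (Fin k) (Fin n) F)
    (hG0 : (G 0).rank = k) (hGz : ∀ i, m < i → G i = 0)
    (W : ℕ) (hW : 1 ≤ W) (ρ : Fin W → ℕ) (hρ : ∀ t, ρ t ≤ n)
    (A : (t : Fin W) → Matrix (Fin n) (Fin (ρ t)) K)
    (hA : ∀ t, (A t).rank = ρ t)
    (hd : n * W - ∑ t, ρ t < dR K G (W - 1)) :
    (∀ s : ℕ → Fin k → F, s 0 ≠ 0 →
      ∃ t : Fin W, Matrix.vecMul (packet G s t) ((A t).map (algebraMap K F)) ≠ 0) ∧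
    (∀ s s' : ℕ → Fin k → F,
      (∀ t : Fin W, Matrix.vecMul (packet G s t) ((A t).map (algebraMap K F)) =
        Matrix.vecMul (packet G s' t) ((A t).map (algebraMap K F))) → s 0 = s' 0) :=
  stmt1_general k n K F G W hW ρ A hA hd
end

section
/- (Necessity of the column sum rank, Theorem 2, part 2.) Let W ≥ 1. There exist integers ρ_0,…,ρ_{W−1} ∈ {0,…,n} with Σ_{t=0}^{W−1} ρ_t = nW − d_R(W−1), matrices A*_t ∈ K^{n×ρ_t} of rank ρ_t for each 0 ≤ t ≤ W−1, and a source sequence (s_0,…,s_{W−1}) with s_0 ≠ 0, such that x_t·A*_t = 0 for every 0 ≤ t ≤ W−1 (so s_0 cannot be recovered from the received sequence). -/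
/-!
Take a source sequence attaining `d_R(W-1)`. For each packet `x_t ∈ Fⁿ`, the `K`-linear map
`a ↦ ∑ aᵢ xᵢ` from `Kⁿ` to `F` has image the `K`-span of the entries of `x_t`, so its kernel has
dimension `n - rank(x_t)`; the columns of `A*_t` are a basis of that kernel. Summing the kernel
dimensions over `t` gives `nW - d_R(W-1)`.
-/

open Matrix

section Annihilator

variable (K : Type*) [Field K] {F : Type*} [Field F] [Algebra K F] {n : ℕ}

lemma vrank_add_finrank_ker_linearCombination (x : Fin n → F) :
    vrank K x + Module.finrank K (LinearMap.ker (Fintype.linearCombination K x)) = n := by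
  have h := LinearMap.finrank_range_add_finrank_ker (Fintype.linearCombination K x)
  rwa [Fintype.range_linearCombination, Module.finrank_fin_fun] at h

lemma vecMul_map_algebraMap_apply {ρ : ℕ} (x : Fin n → F) (A : Matrix (Fin n) (Fin ρ) K)
    (j : Fin ρ) :
    vecMul x (A.map (algebraMap K F)) j = Fintype.linearCombination K x (A.col j) := by
  simp only [vecMul, dotProduct, map_apply, Fintype.linearCombination_apply, col_apply,
    Algebra.smul_def, mul_comm]

lemma exists_rank_eq_vecMul_map_eq_zero (x : Fin n → F) :
    ∃ ρ : ℕ, ρ + vrank K x = n ∧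
      ∃ A : Matrix (Fin n) (Fin ρ) K, A.rank = ρ ∧ vecMul x (A.map (algebraMap K F)) = 0 := by
  set V := LinearMap.ker (Fintype.linearCombination K x)
  let b := Module.finBasis K V
  refine ⟨Module.finrank K V, by linarith [vrank_add_finrank_ker_linearCombination K x],
    (Matrix.of fun j => (b j : Fin n → K))ᵀ, ?_, ?_⟩
  · have hb : LinearIndependent K fun j => (b j : Fin n → K) :=
      b.linearIndependent.map' V.subtype V.ker_subtype
    rw [rank_transpose, LinearIndependent.rank_matrix (M := of _) hb, Fintype.card_fin]
  · funext j
    rw [vecMul_map_algebraMap_apply]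
    exact (b j).2

end Annihilator

lemma exists_dR_eq_sum (K : Type*) [Field K] {F : Type*} [Field F] [Algebra K F] {k n : ℕ}
    (hk : 1 ≤ k) (G : ℕ → Matrix (Fin k) (Fin n) F) (j : ℕ) :
    ∃ s : ℕ → Fin k → F, s 0 ≠ 0 ∧
      dR K G j = ∑ t ∈ Finset.range (j + 1), vrank K (packet G s t) := by
  have hne : {d : ℕ | ∃ s : ℕ → Fin k → F, s 0 ≠ 0 ∧
      d = ∑ t ∈ Finset.range (j + 1), vrank K (packet G s t)}.Nonempty :=
    ⟨_, fun _ _ => 1, fun h => one_ne_zero (congrFun h ⟨0, hk⟩), rfl⟩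
  exact Nat.sInf_mem hne

theorem stmt2_general (k n : ℕ)
    (K F : Type*) [Field K] [Field F] [Algebra K F]
    (hk : 1 ≤ k)
    (G : ℕ → Matrix (Fin k) (Fin n) F)
    (W : ℕ) (hW : 1 ≤ W) :
    ∃ ρ : Fin W → ℕ, (∀ t, ρ t ≤ n) ∧
      (∑ t, ρ t = n * W - dR K G (W - 1)) ∧
      ∃ A : (t : Fin W) → Matrix (Fin n) (Fin (ρ t)) K,
        (∀ t, (A t).rank = ρ t) ∧
        ∃ s : ℕ → Fin k → F, s 0 ≠ 0 ∧
          ∀ t : Fin W, Matrix.vecMul (packet G s t) ((A t).map (algebraMap K F)) = 0 := by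
  obtain ⟨s, hs0, hdR⟩ := exists_dR_eq_sum K hk G (W - 1)
  choose ρ hρ A hArank hAx using
    fun t : Fin W => exists_rank_eq_vecMul_map_eq_zero K (packet G s t)
  refine ⟨ρ, fun t => Nat.le.intro (hρ t), ?_, A, hArank, s, hs0, hAx⟩
  rw [Nat.sub_add_cancel hW, ← Fin.sum_univ_eq_sum_range] at hdR
  have htotal : ∑ t, ρ t + dR K G (W - 1) = n * W := by
    rw [hdR, ← Finset.sum_add_distrib, Finset.sum_congr rfl fun t _ => hρ t]
    simp [mul_comm]
  exact Nat.eq_sub_of_add_eq htotal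

/-- Theorem 2, part 2: necessity of the column sum rank. There exist
column counts `ρ_t` with `Σ ρ_t = nW − d_R(W−1)`, full-rank matrices `A*_t ∈ K^{n×ρ_t}`,
and a source sequence with `s_0 ≠ 0` whose received packets are all zero. -/
theorem stmt2 (q M k n m : ℕ) (hq : IsPrimePow q)
    (K F : Type*) [Field K] [Fintype K] [Field F] [Algebra K F]
    (hK : Fintype.card K = q) (hM : Module.finrank K F = M)
    (hk : 1 ≤ k) (hkn : k < n)
    (G : ℕ → Matrix (Fin k) (Fin n) F)
    (hG0 : (G 0).rank = k) (hGz : ∀ i, m < i → G i = 0)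
    (W : ℕ) (hW : 1 ≤ W) :
    ∃ ρ : Fin W → ℕ, (∀ t, ρ t ≤ n) ∧
      (∑ t, ρ t = n * W - dR K G (W - 1)) ∧
      ∃ A : (t : Fin W) → Matrix (Fin n) (Fin (ρ t)) K,
        (∀ t, (A t).rank = ρ t) ∧
        ∃ s : ℕ → Fin k → F, s 0 ≠ 0 ∧
          ∀ t : Fin W, Matrix.vecMul (packet G s t) ((A t).map (algebraMap K F)) = 0 :=
  stmt2_general k n K F hk G W hW
end

section
/- (Block Hankel super-regular matrix; extension of Almeida et al. to arbitrary prime powers q.) Let n,m ≥ 1, let M = q^{n(m+2)−1}, and let α be a primitive element of F = F_{q^M}. Then the n(m+1)×n(m+1) block Hankel matrix T, whose (i,j) block (0 ≤ i,j ≤ m) is T_{i+j−m} if i+j ≥ m and the zero matrix otherwise, where T_l(r,s) = α^{[nl+r+s]} for 0 ≤ r,s ≤ n−1, is super-regular. -/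
/-
In the Leibniz expansion of a square submatrix, each permutation `σ` avoiding the zero blocks
contributes `± α ^ w σ`, where `q ^ (n * m) * w σ = ∑ t, q ^ (r (σ t) + c t)`. All indices are
below `n * (m + 1)`, so `w σ < q ^ (n * (m + 2) - 1) = M ≤ [F : 𝔽_p]`: the determinant is the
value at `α` of a polynomial over `𝔽_p` of degree less than that of the minimal polynomial of the
primitive element `α`. This polynomial is nonzero: `(i, j) ↦ q ^ (c i + r j)` satisfies a strict
Monge inequality and the admissible positions form an up-set, so an exchange argument shows that
exactly one admissible permutation has maximal weight, and its monomial `± X ^ w σ` cannot cancel.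
-/

open Matrix

/-- A square matrix is super-regular if every square submatrix (selected by strictly
increasing row and column indices) whose Leibniz determinant expansion contains at least
one nonzero product term is invertible. -/
def SuperRegular {F : Type*} [Field F] {N : ℕ} (T : Matrix (Fin N) (Fin N) F) : Prop :=
  ∀ (l : ℕ) (r c : Fin l → Fin N), StrictMono r → StrictMono c →
    (∃ σ : Equiv.Perm (Fin l), ∏ t, T (r t) (c (σ t)) ≠ 0) →
    IsUnit (T.submatrix r c).det

/-- The `n(m+1) × n(m+1)` block Hankel matrix whose `(i,j)` block is `T_{i+j−m}` when
`i+j ≥ m` and `0` otherwise, where `T_l(r,s) = α^{q^{nl+r+s}}`. -/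
noncomputable def hankelT {F : Type*} [Field F] (q n m : ℕ) (α : F) :
    Matrix (Fin (n * (m + 1))) (Fin (n * (m + 1))) F :=
  Matrix.of fun x y =>
    if m ≤ (x : ℕ) / n + (y : ℕ) / n then
      α ^ q ^ (n * ((x : ℕ) / n + (y : ℕ) / n - m) + (x : ℕ) % n + (y : ℕ) % n)
    else 0

open Polynomial Finset Equiv

section NoAdmissibleInversion

variable {ι : Type*} [LinearOrder ι] {P : ι → ι → Prop}

theorem Equiv.Perm.apply_le_apply_of_eqOn_Iio {σ τ : Perm ι}
    (hσ : ∀ ⦃t s⦄, t < s → P t (σ s) → σ t < σ s) (hτ : ∀ i, P i (τ i)) {t : ι}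
    (heq : ∀ s < t, σ s = τ s) : σ t ≤ τ t := by
  by_contra! hlt
  obtain ⟨s, hs⟩ := σ.surjective (τ t)
  rcases lt_trichotomy s t with hst | rfl | hts
  · exact hst.ne (τ.injective ((heq s hst).symm.trans hs))
  · exact hlt.ne' hs
  · exact (hσ hts (hs ▸ hτ t)).not_gt (hs ▸ hlt)

/- The hypotheses say that each `σ t` is the least `P t`-admissible value not taken by any
`σ s`, `s < t`: such a permutation is the greedy one, hence unique. -/
theorem Equiv.Perm.eq_of_forall_apply_lt_apply [WellFoundedLT ι] {σ τ : Perm ι}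
    (hσP : ∀ i, P i (σ i)) (hτP : ∀ i, P i (τ i))
    (hσ : ∀ ⦃t s⦄, t < s → P t (σ s) → σ t < σ s)
    (hτ : ∀ ⦃t s⦄, t < s → P t (τ s) → τ t < τ s) : σ = τ := by
  ext t
  induction t using WellFoundedLT.induction with
  | _ t ih =>
    exact le_antisymm (Perm.apply_le_apply_of_eqOn_Iio hσ hτP ih)
      (Perm.apply_le_apply_of_eqOn_Iio hτ hσP fun s hs => (ih s hs).symm)

end NoAdmissibleInversion

section MongeAssignment

variable {ι β : Type*} [Fintype ι] [AddCommMonoid β]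

theorem Equiv.Perm.sum_mul_swap_add [DecidableEq ι] (f : ι → ι → β) (σ : Perm ι) {t s : ι}
    (hts : t ≠ s) :
    ∑ i, f i ((σ * swap t s) i) + (f t (σ t) + f s (σ s)) =
      ∑ i, f i (σ i) + (f t (σ s) + f s (σ t)) := by
  have hrest : ∑ i ∈ {t, s}ᶜ, f i ((σ * swap t s) i) = ∑ i ∈ {t, s}ᶜ, f i (σ i) :=
    sum_congr rfl fun i hi => by
      simp only [mem_compl, mem_insert, mem_singleton, not_or] at hi
      simp [swap_apply_of_ne_of_ne hi.1 hi.2]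
  rw [← sum_add_sum_compl {t, s}, ← sum_add_sum_compl {t, s} (fun i => f i (σ i)),
    sum_pair hts, sum_pair hts, hrest]
  simp only [Perm.mul_apply, swap_apply_left, swap_apply_right]
  abel

variable [LinearOrder ι] [LinearOrder β] [IsOrderedCancelAddMonoid β]
  {P : ι → ι → Prop} {f : ι → ι → β}

/- Exchange argument: otherwise `σ * swap t s` is still admissible and, by the strict Monge
inequality `hf`, has a strictly larger sum. -/
theorem Equiv.Perm.apply_lt_apply_of_forall_sum_le
    (hf : ∀ ⦃i i' j j'⦄, i < i' → j < j' → f i j' + f i' j < f i j + f i' j')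
    (hP : ∀ ⦃i i' j⦄, i ≤ i' → P i j → P i' j) {σ : Perm ι} (hσ : ∀ i, P i (σ i))
    (hmax : ∀ τ : Perm ι, (∀ i, P i (τ i)) → ∑ i, f i (τ i) ≤ ∑ i, f i (σ i))
    {t s : ι} (hts : t < s) (hPts : P t (σ s)) : σ t < σ s := by
  classical
  by_contra! hle
  have hlt : σ s < σ t := hle.lt_of_ne (σ.injective.ne hts.ne')
  have hswap : ∀ i, P i ((σ * swap t s) i) := by
    intro i
    rcases eq_or_ne i t with rfl | hit
    · simpa using hPts
    rcases eq_or_ne i s with rfl | his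
    · simpa using hP hts.le (hσ t)
    · simpa [swap_apply_of_ne_of_ne hit his] using hσ i
  have hsum := Perm.sum_mul_swap_add f σ hts.ne
  exact (hsum ▸ add_le_add_left (hmax _ hswap) _).not_gt (add_lt_add_right (hf hts hlt) _)

theorem Equiv.Perm.exists_forall_ne_sum_lt
    (hf : ∀ ⦃i i' j j'⦄, i < i' → j < j' → f i j' + f i' j < f i j + f i' j')
    (hP : ∀ ⦃i i' j⦄, i ≤ i' → P i j → P i' j) {σ₀ : Perm ι} (hσ₀ : ∀ i, P i (σ₀ i)) :
    ∃ σ : Perm ι, (∀ i, P i (σ i)) ∧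
      ∀ τ : Perm ι, (∀ i, P i (τ i)) → τ ≠ σ → ∑ i, f i (τ i) < ∑ i, f i (σ i) := by
  classical
  obtain ⟨σ, hσ, hmax⟩ := (univ.filter fun τ : Perm ι => ∀ i, P i (τ i)).exists_max_image
    (fun τ => ∑ i, f i (τ i)) ⟨σ₀, by simpa using hσ₀⟩
  simp only [mem_filter, mem_univ, true_and] at hσ hmax
  refine ⟨σ, hσ, fun τ hτ hne => (hmax τ hτ).lt_of_ne fun heq => hne ?_⟩
  have hτmax : ∀ ρ : Perm ι, (∀ i, P i (ρ i)) → ∑ i, f i (ρ i) ≤ ∑ i, f i (τ i) :=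
    fun ρ hρ => heq ▸ hmax ρ hρ
  exact Perm.eq_of_forall_apply_lt_apply hτ hσ
    (fun _ _ => Perm.apply_lt_apply_of_forall_sum_le hf hP hτ hτmax)
    (fun _ _ => Perm.apply_lt_apply_of_forall_sum_le hf hP hσ hmax)

end MongeAssignment

theorem Nat.pow_add_add_pow_add_lt {q a a' b b' : ℕ} (hq : 2 ≤ q) (ha : a < a') (hb : b < b') :
    q ^ (a + b') + q ^ (a' + b) < q ^ (a + b) + q ^ (a' + b') := by
  have h₁ : q ^ a < q ^ a' := Nat.pow_lt_pow_right hq ha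
  have h₂ : q ^ b < q ^ b' := Nat.pow_lt_pow_right hq hb
  simp only [pow_add]
  nlinarith

/- By AM-GM, twice the sum is at most `∑ q ^ (2 * a i) + ∑ q ^ (2 * b i)`, two sums of distinct
powers of `q` with exponents below `2 * R + 1`. -/
theorem Nat.sum_pow_add_lt {ι : Type*} [Fintype ι] {q R : ℕ} (hq : 2 ≤ q) {a b : ι → ℕ}
    (ha : Function.Injective a) (hb : Function.Injective b) (haR : ∀ i, a i ≤ R)
    (hbR : ∀ i, b i ≤ R) : ∑ i, q ^ (a i + b i) < q ^ (2 * R + 1) := by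
  have hsq : ∀ c : ι → ℕ, Function.Injective c → (∀ i, c i ≤ R) →
      ∑ i, q ^ (2 * c i) < q ^ (2 * R + 1) := by
    intro c hc hcR
    rw [← sum_image (f := (q ^ ·)) fun i _ j _ h => hc (by simpa using h)]
    refine Nat.geomSum_lt hq fun k hk => ?_
    obtain ⟨i, -, rfl⟩ := mem_image.1 hk
    have := hcR i
    omega
  have hamgm : ∀ i, 2 * q ^ (a i + b i) ≤ q ^ (2 * a i) + q ^ (2 * b i) := fun i => by
    simpa only [pow_add, pow_mul', sq, mul_assoc] using two_mul_le_add_sq (q ^ a i) (q ^ b i)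
  have := sum_le_sum fun i (_ : i ∈ univ) => hamgm i
  rw [← mul_sum, sum_add_distrib] at this
  linarith [hsq a ha haR, hsq b hb hbR]

theorem Nat.pow_mul_sum_pow_sub {ι : Type*} [Fintype ι] (q k : ℕ) {a : ι → ℕ}
    (ha : ∀ i, k ≤ a i) : q ^ k * ∑ i, q ^ (a i - k) = ∑ i, q ^ a i := by
  rw [mul_sum]
  exact sum_congr rfl fun i _ => by rw [← pow_add, Nat.add_sub_cancel' (ha i)]

theorem Nat.mul_le_add_of_le_div_add_div {n m x y : ℕ} (h : m ≤ x / n + y / n) :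
    n * m ≤ x + y :=
  calc n * m ≤ n * (x / n) + n * (y / n) := by rw [← mul_add]; exact Nat.mul_le_mul_left n h
    _ ≤ x + y := add_le_add (Nat.mul_div_le x n) (Nat.mul_div_le y n)

theorem ringChar_le_of_card_eq_pow {F : Type*} [Field F] [Fintype F] {q M : ℕ} (hq : 0 < q)
    (hF : Fintype.card F = q ^ M) : ringChar F ≤ q := by
  obtain ⟨k, hp, hk⟩ := FiniteField.card F (ringChar F)
  have hpM : ringChar F ∣ q ^ M := hF ▸ hk ▸ dvd_pow_self _ k.ne_zero
  exact Nat.le_of_dvd hq (hp.dvd_of_dvd_pow hpM)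

theorem le_finrank_of_card_eq_pow {K F : Type*} [Field K] [Fintype K] [Field F] [Fintype F]
    [Algebra K F] {q M : ℕ} (hKq : Fintype.card K ≤ q) (hF : Fintype.card F = q ^ M) :
    M ≤ Module.finrank K F := by
  rw [← Nat.pow_le_pow_iff_right (Fintype.one_lt_card (α := K)),
    ← Module.card_eq_pow_finrank, hF]
  exact Nat.pow_le_pow_left hKq M

theorem finrank_le_natDegree_of_aeval_eq_zero {K F : Type*} [Field K] [Field F] [Algebra K F]
    [FiniteDimensional K F] {α : F} (hα : ∀ x : F, x ≠ 0 → ∃ i : ℕ, x = α ^ i) {Q : K[X]}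
    (hQ : Q ≠ 0) (h : aeval α Q = 0) : Module.finrank K F ≤ Q.natDegree := by
  have htop : IntermediateField.adjoin K {α} = ⊤ := by
    refine eq_top_iff.2 fun x _ => ?_
    rcases eq_or_ne x 0 with rfl | hx
    · exact zero_mem _
    · obtain ⟨i, rfl⟩ := hα x hx
      exact pow_mem (IntermediateField.mem_adjoin_simple_self K α) i
  rw [← (Field.primitive_element_iff_minpoly_natDegree_eq K α).1 htop]
  exact natDegree_le_natDegree (minpoly.degree_le_of_ne_zero K α hQ h)

theorem Matrix.det_eq_aeval_sum_sign_mul_X_pow {ι K R : Type*} [Fintype ι] [DecidableEq ι]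
    [CommRing K] [CommRing R] [Algebra K R] {A : Matrix ι ι R} {P : ι → ι → Prop}
    [DecidableRel P] {α : R} {e : ι → ι → ℕ} (hzero : ∀ i j, ¬P i j → A i j = 0)
    (hpow : ∀ i j, P i j → A i j = α ^ e i j) :
    A.det = aeval α (∑ σ ∈ univ.filter (fun σ : Perm ι => ∀ i, P (σ i) i),
      C ((Perm.sign σ : ℤ) : K) * X ^ ∑ i, e (σ i) i) := by
  have hunsupported : ∑ σ ∈ univ.filter (fun σ : Perm ι => ¬∀ i, P (σ i) i),
      Perm.sign σ • ∏ i, A (σ i) i = 0 := sum_eq_zero fun σ hσ => by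
    obtain ⟨i, hi⟩ := not_forall.1 (mem_filter.1 hσ).2
    rw [prod_eq_zero (f := fun j => A (σ j) j) (mem_univ i) (hzero _ _ hi), smul_zero]
  rw [det_apply, ← sum_filter_add_sum_filter_not univ (fun σ : Perm ι => ∀ i, P (σ i) i),
    hunsupported, add_zero, map_sum]
  refine sum_congr rfl fun σ hσ => ?_
  simp only [mem_filter, mem_univ, true_and] at hσ
  rw [prod_congr rfl fun i _ => hpow _ _ (hσ i), prod_pow_eq_pow_sum]
  simp [Units.smul_def]

/- The determinant is `aeval α Q` for a polynomial `Q` of degree below `[F : K]` whose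
coefficient at the maximal weight is `± 1`. -/
theorem Matrix.det_ne_zero_of_forall_ne_weight_lt {ι K F : Type*} [Fintype ι] [DecidableEq ι]
    [Field K] [Field F] [Algebra K F] [FiniteDimensional K F] {α : F}
    (hα : ∀ x : F, x ≠ 0 → ∃ i : ℕ, x = α ^ i) {A : Matrix ι ι F} {P : ι → ι → Prop}
    {e : ι → ι → ℕ} (hzero : ∀ i j, ¬P i j → A i j = 0)
    (hpow : ∀ i j, P i j → A i j = α ^ e i j)
    (hlt : ∀ σ : Perm ι, (∀ i, P (σ i) i) → ∑ i, e (σ i) i < Module.finrank K F)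
    {σ₀ : Perm ι} (hσ₀ : ∀ i, P (σ₀ i) i)
    (hmax : ∀ τ : Perm ι, (∀ i, P (τ i) i) → τ ≠ σ₀ → ∑ i, e (τ i) i < ∑ i, e (σ₀ i) i) :
    A.det ≠ 0 := by
  classical
  set S := univ.filter fun σ : Perm ι => ∀ i, P (σ i) i
  set Q : K[X] := ∑ σ ∈ S, C ((Perm.sign σ : ℤ) : K) * X ^ ∑ i, e (σ i) i
  have hcoeff : Q.coeff (∑ i, e (σ₀ i) i) = ((Perm.sign σ₀ : ℤ) : K) := by
    rw [finsetSum_coeff, sum_eq_single σ₀]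
    · simp
    · intro σ hσ hne
      rw [coeff_C_mul_X_pow, if_neg (hmax σ (mem_filter.1 hσ).2 hne).ne']
    · simp [S, hσ₀]
  have hQ : Q ≠ 0 := fun h => by
    rw [h, coeff_zero] at hcoeff
    rcases Int.units_eq_one_or (Perm.sign σ₀) with h | h <;> simp [h] at hcoeff
  have hdeg : Q.natDegree < Module.finrank K F := by
    have hpos : 0 < Module.finrank K F := Module.finrank_pos
    have : Q.natDegree ≤ Module.finrank K F - 1 :=
      natDegree_sum_le_of_forall_le _ _ fun σ hσ =>
        (natDegree_C_mul_X_pow_le _ _).trans (by have := hlt σ (mem_filter.1 hσ).2; omega)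
    omega
  rw [det_eq_aeval_sum_sign_mul_X_pow (K := K) hzero hpow]
  exact fun h => (finrank_le_natDegree_of_aeval_eq_zero hα hQ h).not_gt hdeg

section Hankel

variable {F : Type*} [Field F] {q n m : ℕ}

theorem hankelT_apply_of_le (α : F) {x y : Fin (n * (m + 1))}
    (h : m ≤ (x : ℕ) / n + (y : ℕ) / n) :
    hankelT q n m α x y = α ^ q ^ ((x : ℕ) + y - n * m) := by
  have hx := Nat.div_add_mod (x : ℕ) n
  have hy := Nat.div_add_mod (y : ℕ) n
  have hnm : n * m ≤ n * (x / n) + n * (y / n) := by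
    rw [← mul_add]; exact Nat.mul_le_mul_left n h
  rw [hankelT, of_apply, if_pos h, Nat.mul_sub, mul_add]
  congr 2
  generalize n * (x / n) = a, n * (y / n) = b, n * m = k at *
  omega

theorem hankelT_apply_of_lt (α : F) {x y : Fin (n * (m + 1))}
    (h : (x : ℕ) / n + (y : ℕ) / n < m) : hankelT q n m α x y = 0 := by
  rw [hankelT, of_apply, if_neg h.not_ge]

theorem le_div_add_div_of_prod_hankelT_ne_zero (α : F) {l : ℕ} {r c : Fin l → Fin (n * (m + 1))}
    {σ : Perm (Fin l)} (h : ∏ t, hankelT q n m α (r t) (c (σ t)) ≠ 0) (i : Fin l) :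
    m ≤ (r (σ.symm i) : ℕ) / n + (c i : ℕ) / n := by
  by_contra hi
  refine h (prod_eq_zero (mem_univ (σ.symm i)) ?_)
  rw [σ.apply_symm_apply]
  exact hankelT_apply_of_lt α (not_le.1 hi)

/-- The exponent of `α` in the `σ`-term of the Leibniz expansion of
`(hankelT q n m α).submatrix r c`. -/
def hankelWeight (q n m : ℕ) {l : ℕ} (r c : Fin l → Fin (n * (m + 1))) (σ : Perm (Fin l)) : ℕ :=
  ∑ i, q ^ ((r (σ i) : ℕ) + c i - n * m)

variable {l : ℕ} {r c : Fin l → Fin (n * (m + 1))}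

theorem pow_mul_hankelWeight {σ : Perm (Fin l)}
    (hσ : ∀ i, m ≤ (r (σ i) : ℕ) / n + (c i : ℕ) / n) :
    q ^ (n * m) * hankelWeight q n m r c σ = ∑ i, q ^ ((r (σ i) : ℕ) + c i) :=
  Nat.pow_mul_sum_pow_sub q (n * m) fun i => Nat.mul_le_add_of_le_div_add_div (hσ i)

theorem hankelWeight_lt (hq : 2 ≤ q) (hn : 1 ≤ n) (hr : Function.Injective r)
    (hc : Function.Injective c) {σ : Perm (Fin l)}
    (hσ : ∀ i, m ≤ (r (σ i) : ℕ) / n + (c i : ℕ) / n) :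
    hankelWeight q n m r c σ < q ^ (n * (m + 2) - 1) := by
  have hbound := Nat.sum_pow_add_lt hq (R := n * (m + 1) - 1) (a := fun i => (r (σ i) : ℕ))
    (b := fun i => (c i : ℕ)) (Fin.val_injective.comp (hr.comp σ.injective))
    (Fin.val_injective.comp hc)
    (fun i => Nat.le_sub_one_of_lt (r (σ i)).is_lt) (fun i => Nat.le_sub_one_of_lt (c i).is_lt)
  have hexp : 2 * (n * (m + 1) - 1) + 1 = n * m + (n * (m + 2) - 1) := by
    have h₁ : n * (m + 1) = n * m + n := by ring
    have h₂ : n * (m + 2) = n * m + 2 * n := by ring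
    omega
  rw [hexp, pow_add, ← pow_mul_hankelWeight hσ] at hbound
  exact Nat.lt_of_mul_lt_mul_left hbound

theorem exists_forall_ne_hankelWeight_lt (hq : 2 ≤ q) (hr : StrictMono r) (hc : StrictMono c)
    {σ₀ : Perm (Fin l)} (hσ₀ : ∀ i, m ≤ (r (σ₀ i) : ℕ) / n + (c i : ℕ) / n) :
    ∃ σ : Perm (Fin l), (∀ i, m ≤ (r (σ i) : ℕ) / n + (c i : ℕ) / n) ∧
      ∀ τ : Perm (Fin l), (∀ i, m ≤ (r (τ i) : ℕ) / n + (c i : ℕ) / n) → τ ≠ σ →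
        hankelWeight q n m r c τ < hankelWeight q n m r c σ := by
  obtain ⟨σ, hσ, hmax⟩ := Perm.exists_forall_ne_sum_lt (f := fun i j => q ^ ((r j : ℕ) + c i))
    (P := fun i j => m ≤ (r j : ℕ) / n + (c i : ℕ) / n)
    (fun i i' j j' hi hj => (add_comm _ _).trans_lt (Nat.pow_add_add_pow_add_lt hq (hr hj) (hc hi)))
    (fun i i' j hi h => h.trans (Nat.add_le_add_left (Nat.div_le_div_right (hc.monotone hi)) _))
    hσ₀
  refine ⟨σ, hσ, fun τ hτ hne => Nat.lt_of_mul_lt_mul_left (a := q ^ (n * m)) ?_⟩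
  rw [pow_mul_hankelWeight hτ, pow_mul_hankelWeight hσ]
  exact hmax τ hτ hne

end Hankel

theorem stmt9_general (q n m M : ℕ) (hq : IsPrimePow q) (hn : 1 ≤ n)
    (hM : M = q ^ (n * (m + 2) - 1))
    (F : Type*) [Field F] [Fintype F] (hF : Fintype.card F = q ^ M)
    (α : F) (hα : ∀ x : F, x ≠ 0 → ∃ i : ℕ, x = α ^ i) :
    SuperRegular (hankelT q n m α) := by
  classical
  intro l r c hr hc ⟨σ₀, hσ₀⟩
  let p := ringChar F
  have : Fact p.Prime := ⟨CharP.char_is_prime F p⟩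
  let _ : Algebra (ZMod p) F := ZMod.algebra F p
  have hfinrank : M ≤ Module.finrank (ZMod p) F := le_finrank_of_card_eq_pow
    ((ZMod.card p).trans_le (ringChar_le_of_card_eq_pow hq.pos hF)) hF
  obtain ⟨σ, hσ, hmax⟩ := exists_forall_ne_hankelWeight_lt hq.two_le hr hc
    (le_div_add_div_of_prod_hankelT_ne_zero α hσ₀)
  rw [isUnit_iff_ne_zero]
  exact det_ne_zero_of_forall_ne_weight_lt (K := ZMod p) hα
    (fun i j h => hankelT_apply_of_lt α (not_le.1 h)) (fun i j h => hankelT_apply_of_le α h)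
    (fun τ hτ => (hankelWeight_lt hq.two_le hn hr.injective hc.injective hτ).trans_le
      (hM ▸ hfinrank)) hσ hmax

/-- block Hankel super-regular matrix, extension of Almeida et al.: for
`M = q^{n(m+2)−1}` and `α` a primitive element of `F = F_{q^M}`, the block Hankel matrix
`T` is super-regular. -/
theorem stmt9 (q n m M : ℕ) (hq : IsPrimePow q) (hn : 1 ≤ n) (hm : 1 ≤ m)
    (hM : M = q ^ (n * (m + 2) - 1))
    (F : Type*) [Field F] [Fintype F] (hF : Fintype.card F = q ^ M)
    (α : F) (hα : ∀ x : F, x ≠ 0 → ∃ i : ℕ, x = α ^ i) :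
    SuperRegular (hankelT q n m α) :=
  stmt9_general q n m M hq hn hM F hF α hα
end
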